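/- Let V be a finite-dimensional real vector space, U : V^3 → ℝ a trilinear map that is either totally symmetric or totally antisymmetric, and w : V → ℝ a linear functional. Then y_t*(U⊗w) = 0 and y_t*(w⊗U) = 0. -/

import Mathlib

/-- Pointwise action of a group ring element `a ∈ ℝ[S_r]` on a function
`T : V^r → ℝ`: `(aT)(v₁,…,v_r) = Σ_p a(p)·T(v_{p(1)},…,v_{p(r)})`. -/
noncomputable def fact {V : Type} [AddCommGroup V] [Module ℝ V] {r : ℕ}
    (a : MonoidAlgebra ℝ (Equiv.Perm (Fin r)))
    (T : (Fin r → V) → ℝ) : (Fin r → V) → ℝ :=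
  fun v => ∑ p : Equiv.Perm (Fin r), a.coeff p * T (fun i => v (p i))
/-- The star map `a* := Σ_p a(p)·p⁻¹` on the group ring `ℝ[S_r]`. -/
noncomputable def astar {r : ℕ} (a : MonoidAlgebra ℝ (Equiv.Perm (Fin r))) :
    MonoidAlgebra ℝ (Equiv.Perm (Fin r)) :=
  MonoidAlgebra.ofCoeff (Finsupp.equivFunOnFinite.symm (fun p => a.coeff p⁻¹))
/-- The Young symmetrizer `y_t = Σ_{p∈H_t} Σ_{q∈V_t} sign(q)·(p∘q)` of the tableau with
rows `{1,3}`, `{2,4}` (indices `0`-based in `Fin 4`):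
`H_t = {id, (1 3), (2 4), (1 3)(2 4)}`, `V_t = {id, (1 2), (3 4), (1 2)(3 4)}`. -/
noncomputable def yt : MonoidAlgebra ℝ (Equiv.Perm (Fin 4)) :=
  (MonoidAlgebra.single 1 1 + MonoidAlgebra.single (Equiv.swap 0 2) 1 +
     MonoidAlgebra.single (Equiv.swap 1 3) 1 +
     MonoidAlgebra.single (Equiv.swap 0 2 * Equiv.swap 1 3) 1) *
  (MonoidAlgebra.single 1 1 - MonoidAlgebra.single (Equiv.swap 0 1) 1 -
     MonoidAlgebra.single (Equiv.swap 2 3) 1 +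
     MonoidAlgebra.single (Equiv.swap 0 1 * Equiv.swap 2 3) 1)

/-!
Both tensors transform by `sign ^ e` (`e = 0` for symmetric `U`, `e = 1` for antisymmetric `U`)
under the permutations of the four slots that fix the slot `m` of `w`. Grouping the terms of
`(a T)(v) = Σ_k a(k) T(v ∘ k)` by the value `k m = j`, all terms of one coset `{k | k m = j}` are
multiples of the same value `T(v ∘ swap m j)`, so `a T = 0` as soon as the `sign ^ e`-weighted
coefficient sums of `a` over these cosets vanish. For `y_t*` this is a finite check. In the
language of representations: the module induced from the stabilizer of a point by `sign ^ e`
contains no copy of the Specht module of shape `(2, 2)`.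
-/

open Equiv MonoidAlgebra

namespace YoungSymmetrizer

variable {V : Type}

theorem exists_perm_succAbove_of_apply_eq {n : ℕ} {m : Fin (n + 1)} (g : Perm (Fin (n + 1)))
    (hg : g m = m) :
    ∃ p : Perm (Fin n), Perm.sign p = Perm.sign g ∧
      ∀ i, g (m.succAbove i) = m.succAbove (p i) := by
  have hne : ∀ x, g x ≠ m ↔ x ≠ m := fun x =>
    ⟨fun h hx => h (hx ▸ hg), fun h hx => h (g.injective (hx.trans hg.symm))⟩
  refine ⟨(finSuccAboveEquiv m).symm.permCongr (g.subtypePerm hne), ?_, fun i => ?_⟩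
  · rw [Perm.sign_permCongr, Perm.sign_subtypePerm]
    exact fun x hx hxm => hx (hxm ▸ hg)
  · exact (congrArg Subtype.val ((finSuccAboveEquiv m).apply_symm_apply
      ⟨g (m.succAbove i), (hne _).2 (m.succAbove_ne i)⟩)).symm

def StabilizerEquivariant {r : ℕ} (m : Fin r) (e : ℕ) (T : (Fin r → V) → ℝ) : Prop :=
  ∀ g : Perm (Fin r), g m = m → ∀ v : Fin r → V,
    T (fun i => v (g i)) = ((Perm.sign g : ℤ) : ℝ) ^ e * T v

theorem stabilizerEquivariant_succAbove {n : ℕ} (m : Fin (n + 1)) (e : ℕ)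
    (F : (Fin n → V) → V → ℝ)
    (hF : ∀ x (p : Perm (Fin n)) y,
      F (fun i => x (p i)) y = ((Perm.sign p : ℤ) : ℝ) ^ e * F x y) :
    StabilizerEquivariant m e (fun v => F (fun i => v (m.succAbove i)) (v m)) := by
  intro g hg v
  obtain ⟨p, hsign, hp⟩ := exists_perm_succAbove_of_apply_eq g hg
  simp only [hg, hp, ← hsign]
  exact hF (fun i => v (m.succAbove i)) p (v m)

theorem StabilizerEquivariant.apply_comp_eq {r : ℕ} {m : Fin r} {e : ℕ}
    {T : (Fin r → V) → ℝ} (hT : StabilizerEquivariant m e T) (k : Perm (Fin r))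
    (v : Fin r → V) : T (fun i => v (k i)) = ((Perm.sign k : ℤ) : ℝ) ^ e *
      (((Perm.sign (swap m (k m)) : ℤ) : ℝ) ^ e * T (fun i => v (swap m (k m) i))) := by
  set s := swap m (k m)
  have hfix : (s⁻¹ * k) m = m := by simp [s, swap_apply_right]
  have h := hT (s⁻¹ * k) hfix (fun i => v (s i))
  simp only [Perm.mul_apply, Perm.coe_inv, Equiv.apply_symm_apply] at h
  rw [h, Perm.sign_mul, Perm.sign_inv, Units.val_mul, Int.cast_mul, mul_pow]
  ring

noncomputable def cosetSum {r : ℕ} (m : Fin r) (e : ℕ) (a : MonoidAlgebra ℝ (Perm (Fin r)))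
    (j : Fin r) : ℝ :=
  ∑ k with k m = j, ((Perm.sign k : ℤ) : ℝ) ^ e * a.coeff k

theorem fact_eq_zero_of_cosetSum_eq_zero [AddCommGroup V] [Module ℝ V] {r : ℕ} {m : Fin r}
    {e : ℕ} {T : (Fin r → V) → ℝ} (hT : StabilizerEquivariant m e T)
    (a : MonoidAlgebra ℝ (Perm (Fin r))) (ha : ∀ j, cosetSum m e a j = 0) (v : Fin r → V) :
    fact a T v = 0 := by
  rw [fact, ← Finset.sum_fiberwise Finset.univ (fun k => k m)]
  refine Finset.sum_eq_zero fun j _ => ?_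
  calc ∑ k with k m = j, a.coeff k * T (fun i => v (k i))
      = ∑ k with k m = j, ((Perm.sign k : ℤ) : ℝ) ^ e * a.coeff k *
          (((Perm.sign (swap m j) : ℤ) : ℝ) ^ e * T (fun i => v (swap m j i))) := by
        refine Finset.sum_congr rfl fun k hk => ?_
        obtain rfl := (Finset.mem_filter.1 hk).2
        rw [hT.apply_comp_eq k v]
        ring
    _ = 0 := by rw [← Finset.sum_mul, ← cosetSum, ha, zero_mul]

theorem cosetSum_add {r : ℕ} (m : Fin r) (e : ℕ) (a b : MonoidAlgebra ℝ (Perm (Fin r)))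
    (j : Fin r) : cosetSum m e (a + b) j = cosetSum m e a j + cosetSum m e b j := by
  simp only [cosetSum, coeff_add, Finsupp.add_apply, mul_add, Finset.sum_add_distrib]

theorem cosetSum_sub {r : ℕ} (m : Fin r) (e : ℕ) (a b : MonoidAlgebra ℝ (Perm (Fin r)))
    (j : Fin r) : cosetSum m e (a - b) j = cosetSum m e a j - cosetSum m e b j := by
  simp only [cosetSum, coeff_sub, Finsupp.sub_apply, mul_sub, Finset.sum_sub_distrib]

theorem cosetSum_single {r : ℕ} (m : Fin r) (e : ℕ) (k : Perm (Fin r)) (c : ℝ) (j : Fin r) :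
    cosetSum m e (single k c) j = if k m = j then ((Perm.sign k : ℤ) : ℝ) ^ e * c else 0 := by
  simp [cosetSum, coeff_single, Finsupp.single_apply]

theorem astar_add {r : ℕ} (a b : MonoidAlgebra ℝ (Perm (Fin r))) :
    astar (a + b) = astar a + astar b := by
  ext p; rfl

theorem astar_sub {r : ℕ} (a b : MonoidAlgebra ℝ (Perm (Fin r))) :
    astar (a - b) = astar a - astar b := by
  ext p; rfl

theorem astar_single {r : ℕ} (g : Perm (Fin r)) (c : ℝ) :
    astar (single g c) = single g⁻¹ c := by
  ext p
  simp [astar, coeff_single, Finsupp.single_apply, inv_eq_iff_eq_inv]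

theorem cosetSum_astar_yt (e : ℕ) (m j : Fin 4) : cosetSum m e (astar yt) j = 0 := by
  simp only [yt, mul_add, add_mul, mul_sub, single_mul_single, mul_one, one_mul,
    astar_add, astar_sub, astar_single, cosetSum_add, cosetSum_sub, cosetSum_single, mul_inv_rev,
    swap_inv, inv_one]
  fin_cases m <;> fin_cases j <;>
  · simp only [Fin.isValue, Fin.zero_eta, Fin.mk_one, Fin.reduceFinMk, Fin.reduceEq, Perm.coe_one,
      Perm.coe_mul, Function.comp_apply, id_eq, swap_apply_left, swap_apply_right, swap_apply_def,
      Perm.sign_one, Perm.sign_mul, Perm.sign_swap', Units.val_one, Units.val_neg, Int.reduceNeg,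
      Int.cast_one, Int.cast_neg, mul_neg, mul_one, neg_neg, one_pow, zero_ne_one, one_ne_zero,
      ↓reduceIte]
    ring

theorem fact_astar_yt_eq_zero [AddCommGroup V] [Module ℝ V] {m : Fin 4} {e : ℕ}
    {T : (Fin 4 → V) → ℝ} (hT : StabilizerEquivariant m e T) (v : Fin 4 → V) :
    fact (astar yt) T v = 0 :=
  fact_eq_zero_of_cosetSum_eq_zero hT _ (cosetSum_astar_yt e m) v

end YoungSymmetrizer

open YoungSymmetrizer

theorem stmt_11_general (V : Type) [AddCommGroup V] [Module ℝ V]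
    (U : MultilinearMap ℝ (fun _ : Fin 3 => V) ℝ) (w : V →ₗ[ℝ] ℝ)
    (hU : (∀ (v : Fin 3 → V) (p : Equiv.Perm (Fin 3)), U (fun i => v (p i)) = U v) ∨
          (∀ (v : Fin 3 → V) (p : Equiv.Perm (Fin 3)),
            U (fun i => v (p i)) = ((Equiv.Perm.sign p : ℤ) : ℝ) * U v)) :
    (∀ v : Fin 4 → V,
      fact (astar yt) (fun v' => U ![v' 0, v' 1, v' 2] * w (v' 3)) v = 0) ∧
    (∀ v : Fin 4 → V,
      fact (astar yt) (fun v' => w (v' 0) * U ![v' 1, v' 2, v' 3]) v = 0) := by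
  obtain ⟨e, hUe⟩ : ∃ e : ℕ, ∀ (x : Fin 3 → V) (p : Perm (Fin 3)),
      U (fun i => x (p i)) = ((Perm.sign p : ℤ) : ℝ) ^ e * U x := by
    rcases hU with h | h
    · exact ⟨0, by simpa using h⟩
    · exact ⟨1, by simpa using h⟩
  have hUw := stabilizerEquivariant_succAbove (3 : Fin 4) e (fun x y => U x * w y)
    fun x p y => by rw [hUe, mul_assoc]
  have hwU := stabilizerEquivariant_succAbove (0 : Fin 4) e (fun x y => w y * U x)
    fun x p y => by rw [hUe, mul_left_comm]
  have h3 (v : Fin 4 → V) : ![v 0, v 1, v 2] = fun i => v ((3 : Fin 4).succAbove i) := by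
    ext i; fin_cases i <;> rfl
  have h0 (v : Fin 4 → V) : ![v 1, v 2, v 3] = fun i => v ((0 : Fin 4).succAbove i) := by
    ext i; fin_cases i <;> rfl
  simp only [← h3, ← h0] at hUw hwU
  exact ⟨fact_astar_yt_eq_zero hUw, fact_astar_yt_eq_zero hwU⟩

/-- If `U : V³ → ℝ` is trilinear and totally symmetric or totally
antisymmetric and `w : V → ℝ` is linear, then `y_t*(U⊗w) = 0` and `y_t*(w⊗U) = 0`. -/
theorem stmt_11 (V : Type) [AddCommGroup V] [Module ℝ V] [FiniteDimensional ℝ V]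
    (U : MultilinearMap ℝ (fun _ : Fin 3 => V) ℝ) (w : V →ₗ[ℝ] ℝ)
    (hU : (∀ (v : Fin 3 → V) (p : Equiv.Perm (Fin 3)), U (fun i => v (p i)) = U v) ∨
          (∀ (v : Fin 3 → V) (p : Equiv.Perm (Fin 3)),
            U (fun i => v (p i)) = ((Equiv.Perm.sign p : ℤ) : ℝ) * U v)) :
    (∀ v : Fin 4 → V,
      fact (astar yt) (fun v' => U ![v' 0, v' 1, v' 2] * w (v' 3)) v = 0) ∧
    (∀ v : Fin 4 → V,
      fact (astar yt) (fun v' => w (v' 0) * U ![v' 1, v' 2, v' 3]) v = 0) :=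
  stmt_11_general V U w hU
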